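/- arXiv:1808.04747 — 4 statements merged into one kernel-verified Lean document; each statement's English description precedes it below -/
import Mathlib

section
/- Comparison principle for the QVI with positive switching cost: let c > 0. If u ∈ ℝ^{N×d} satisfies min(F_i(u)_l, u^i_l − (M_i u)_l) ≤ 0 for all i ∈ I and l ∈ {1,…,N}, and v ∈ ℝ^{N×d} satisfies min(F_i(v)_l, v^i_l − (M_i v)_l) ≥ 0 for all i ∈ I and l ∈ {1,…,N}, then u ≤ v componentwise. In particular, a solution of the QVI with switching cost c > 0 is unique. -/
/-! If a subsolution `u` exceeds a supersolution `v` somewhere, take a point `(i, l)` where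
`u - v` is maximal and, among such points, `u` is maximal. There the `F`-branch of the
subsolution inequality contradicts monotonicity of `F`, since `F v ≥ 0`. In the switching branch
`u i l ≤ u j l - c` for some `j ≠ i`, while `v j l - c ≤ v i l`; hence `(j, l)` also maximizes
`u - v` but has a larger `u`, which is impossible because `c > 0`. -/

open Filter Topology

noncomputable section

/-- A monotone system with constant `γ`: whenever `u i l - v i l` is the (nonnegative)
maximum of all differences, `F u i l - F v i l ≥ γ (u i l - v i l)`. -/
def IsMonotoneSystem {N d : ℕ} (γ : ℝ)
    (F : (Fin d → Fin N → ℝ) → Fin d → Fin N → ℝ) : Prop :=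
  ∀ u v : Fin d → Fin N → ℝ, ∀ i : Fin d, ∀ l : Fin N,
    (∀ (j : Fin d) (k : Fin N), u j k - v j k ≤ u i l - v i l) →
    0 ≤ u i l - v i l →
    γ * (u i l - v i l) ≤ F u i l - F v i l

/-- The intervention operator `(M_i u)_l = max_{j ≠ i} (u j l - c)`. -/
def Mop {N d : ℕ} (c : ℝ) (u : Fin d → Fin N → ℝ) (i : Fin d) (l : Fin N) : ℝ :=
  ⨆ j : {j : Fin d // j ≠ i}, (u j l - c)

theorem Finite.exists_lex_max {α β γ : Type*} [Finite α] [Nonempty α] [LinearOrder β]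
    [LinearOrder γ] (f : α → β) (g : α → γ) :
    ∃ q, ∀ r, f r ≤ f q ∧ (f r = f q → g r ≤ g q) := by
  obtain ⟨q, hq⟩ := Finite.exists_max fun r => toLex (f r, g r)
  exact ⟨q, fun r => Prod.Lex.toLex_le_toLex'.mp (hq r)⟩

section QVI

variable {N d : ℕ}

def IsQVISubsolution (F : (Fin d → Fin N → ℝ) → Fin d → Fin N → ℝ) (c : ℝ)
    (u : Fin d → Fin N → ℝ) : Prop :=
  ∀ i l, min (F u i l) (u i l - Mop c u i l) ≤ 0

def IsQVISupersolution (F : (Fin d → Fin N → ℝ) → Fin d → Fin N → ℝ) (c : ℝ)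
    (v : Fin d → Fin N → ℝ) : Prop :=
  ∀ i l, 0 ≤ min (F v i l) (v i l - Mop c v i l)

theorem sub_le_Mop (c : ℝ) (u : Fin d → Fin N → ℝ) {i j : Fin d} (hji : j ≠ i)
    (l : Fin N) : u j l - c ≤ Mop c u i l :=
  le_ciSup (f := fun j : {j : Fin d // j ≠ i} => u j l - c) (Finite.bddAbove_range _)
    ⟨j, hji⟩

theorem exists_ne_Mop_eq [Nontrivial (Fin d)] (c : ℝ) (u : Fin d → Fin N → ℝ) (i : Fin d)
    (l : Fin N) : ∃ j ≠ i, Mop c u i l = u j l - c := by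
  obtain ⟨j, hji⟩ := exists_ne i
  have : Nonempty {j : Fin d // j ≠ i} := ⟨⟨j, hji⟩⟩
  obtain ⟨⟨j, hji⟩, hj⟩ :=
    exists_eq_ciSup_of_finite (f := fun j : {j : Fin d // j ≠ i} => u j l - c)
  exact ⟨j, hji, hj.symm⟩

theorem exists_switch_of_le_Mop [Nontrivial (Fin d)] {c : ℝ} {u v : Fin d → Fin N → ℝ}
    {i : Fin d} {l : Fin N} (hu : u i l ≤ Mop c u i l) (hv : Mop c v i l ≤ v i l) :
    ∃ j, u i l + c ≤ u j l ∧ u i l - v i l ≤ u j l - v j l := by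
  obtain ⟨j, hji, hj⟩ := exists_ne_Mop_eq c u i l
  have hvj := sub_le_Mop c v hji l
  exact ⟨j, by linarith, by linarith⟩

theorem IsMonotoneSystem.apply_lt_of_isMax_sub {γ : ℝ} (hγ : 0 < γ)
    {F : (Fin d → Fin N → ℝ) → Fin d → Fin N → ℝ} (hF : IsMonotoneSystem γ F)
    {u v : Fin d → Fin N → ℝ} {i : Fin d} {l : Fin N}
    (hmax : ∀ j k, u j k - v j k ≤ u i l - v i l) (hpos : 0 < u i l - v i l) :
    F v i l < F u i l := by
  linarith [hF u v i l hmax hpos.le, mul_pos hγ hpos]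

theorem IsQVISubsolution.le_of_isQVISupersolution [Nontrivial (Fin d)] {γ : ℝ}
    (hγ : 0 < γ) {F : (Fin d → Fin N → ℝ) → Fin d → Fin N → ℝ}
    (hF : IsMonotoneSystem γ F) {c : ℝ} (hc : 0 < c) {u v : Fin d → Fin N → ℝ}
    (hu : IsQVISubsolution F c u) (hv : IsQVISupersolution F c v) : u ≤ v := by
  by_contra hnot
  obtain ⟨i₀, l₀, hlt₀⟩ : ∃ i l, v i l < u i l := by
    simpa only [Pi.le_def, not_forall, not_le] using hnot
  have : Nonempty (Fin d × Fin N) := ⟨(i₀, l₀)⟩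
  obtain ⟨⟨i, l⟩, hmax⟩ :=
    Finite.exists_lex_max (fun p : Fin d × Fin N => u p.1 p.2 - v p.1 p.2) fun p => u p.1 p.2
  have hpos : 0 < u i l - v i l := by linarith [(hmax (i₀, l₀)).1]
  obtain ⟨hFv, hMv⟩ := le_min_iff.mp (hv i l)
  rcases min_le_iff.mp (hu i l) with hFu | hMu
  · have := hF.apply_lt_of_isMax_sub hγ (fun j k => (hmax (j, k)).1) hpos
    linarith
  · obtain ⟨j, hjc, hjsub⟩ :=
      exists_switch_of_le_Mop (v := v) (by linarith : u i l ≤ _) (by linarith)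
    have := (hmax (j, l)).2 (le_antisymm (hmax (j, l)).1 hjsub)
    linarith

end QVI

theorem qvi_comparison_and_uniqueness_general {N d : ℕ} (hd : 2 ≤ d)
    (γ : ℝ) (hγ : 0 < γ)
    (F : (Fin d → Fin N → ℝ) → Fin d → Fin N → ℝ)
    (hFmono : IsMonotoneSystem γ F)
    (c : ℝ) (hc : 0 < c)
    (u v : Fin d → Fin N → ℝ)
    (hu : ∀ i l, min (F u i l) (u i l - Mop c u i l) ≤ 0)
    (hv : ∀ i l, 0 ≤ min (F v i l) (v i l - Mop c v i l)) :
    (∀ i l, u i l ≤ v i l) ∧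
    ∀ u₁ u₂ : Fin d → Fin N → ℝ,
      (∀ i l, min (F u₁ i l) (u₁ i l - Mop c u₁ i l) = 0) →
      (∀ i l, min (F u₂ i l) (u₂ i l - Mop c u₂ i l) = 0) →
      u₁ = u₂ := by
  have hcomp : ∀ {u v}, IsQVISubsolution F c u → IsQVISupersolution F c v → u ≤ v :=
    have := Fin.nontrivial_iff_two_le.mpr hd
    fun hu hv => hu.le_of_isQVISupersolution hγ hFmono hc hv
  refine ⟨hcomp hu hv, fun u₁ u₂ h₁ h₂ => le_antisymm ?_ ?_⟩
  · exact hcomp (fun i l => (h₁ i l).le) (fun i l => (h₂ i l).ge)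
  · exact hcomp (fun i l => (h₂ i l).le) (fun i l => (h₁ i l).ge)

/-- Comparison principle for the QVI with positive switching cost, and uniqueness of
solutions of the QVI. -/
theorem qvi_comparison_and_uniqueness {N d : ℕ} (hN : 1 ≤ N) (hd : 2 ≤ d)
    (γ : ℝ) (hγ : 0 < γ)
    (F : (Fin d → Fin N → ℝ) → Fin d → Fin N → ℝ)
    (hFcont : Continuous F) (hFmono : IsMonotoneSystem γ F)
    (c : ℝ) (hc : 0 < c)
    (u v : Fin d → Fin N → ℝ)
    (hu : ∀ i l, min (F u i l) (u i l - Mop c u i l) ≤ 0)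
    (hv : ∀ i l, 0 ≤ min (F v i l) (v i l - Mop c v i l)) :
    (∀ i l, u i l ≤ v i l) ∧
    ∀ u₁ u₂ : Fin d → Fin N → ℝ,
      (∀ i l, min (F u₁ i l) (u₁ i l - Mop c u₁ i l) = 0) →
      (∀ i l, min (F u₂ i l) (u₂ i l - Mop c u₂ i l) = 0) →
      u₁ = u₂ :=
  qvi_comparison_and_uniqueness_general hd γ hγ F hFmono c hc u v hu hv
end
end

section
/- Comparison principle for the penalized equation: let ρ ≥ 0 and c ≥ 0. If u ∈ ℝ^{N×d} satisfies F_i(u)_l − ρ·Σ_{j≠i} π(u^j_l − c − u^i_l) ≤ 0 for all i ∈ I and l ∈ {1,…,N}, and v ∈ ℝ^{N×d} satisfies F_i(v)_l − ρ·Σ_{j≠i} π(v^j_l − c − v^i_l) ≥ 0 for all i ∈ I and l ∈ {1,…,N}, then u ≤ v componentwise. -/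
/-! At a maximiser `(i, l)` of `u - v`, every penalty argument `u j l - c - u i l` is at most the
corresponding `v j l - c - v i l`, so, `π` being non-decreasing and `ρ ≥ 0`, the two inequalities
give `F u i l ≤ F v i l`. If the maximum were positive, monotonicity of the system would force
`F u i l - F v i l ≥ γ (u i l - v i l) > 0`. -/

open Filter Topology

noncomputable section

/-- The sup-norm `‖u‖ = max_{i,l} |u i l|`. -/
def supNorm {N d : ℕ} (u : Fin d → Fin N → ℝ) : ℝ :=
  ⨆ p : Fin d × Fin N, |u p.1 p.2|

/-- A penalty function: continuous, non-decreasing, vanishing on `(-∞,0]` and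
positive on `(0,∞)`. -/
def IsPenaltyFunction (π : ℝ → ℝ) : Prop :=
  Continuous π ∧ Monotone π ∧ (∀ y : ℝ, y ≤ 0 → π y = 0) ∧ (∀ y : ℝ, 0 < y → 0 < π y)

/-- A concave system: each `F_i` is concave (componentwise). -/
def IsConcaveSystem {N d : ℕ}
    (F : (Fin d → Fin N → ℝ) → Fin d → Fin N → ℝ) : Prop :=
  ∀ (i : Fin d) (u v : Fin d → Fin N → ℝ) (θ : ℝ), 0 ≤ θ → θ ≤ 1 → ∀ l : Fin N,
    θ * F u i l + (1 - θ) * F v i l ≤ F (fun j k => θ * u j k + (1 - θ) * v j k) i l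

theorem Finset.sum_penalty_le_of_sub_le {ι : Type*} {π : ℝ → ℝ} (hπ : Monotone π)
    (s : Finset ι) (c : ℝ) {x y : ι → ℝ} {i : ι} (h : ∀ j ∈ s, x j - y j ≤ x i - y i) :
    ∑ j ∈ s, π (x j - c - x i) ≤ ∑ j ∈ s, π (y j - c - y i) :=
  Finset.sum_le_sum fun j hj => hπ (by linarith [h j hj])

theorem IsMonotoneSystem.le_of_le_at_max {N d : ℕ} {γ : ℝ}
    {F : (Fin d → Fin N → ℝ) → Fin d → Fin N → ℝ} (hF : IsMonotoneSystem γ F) (hγ : 0 < γ)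
    {u v : Fin d → Fin N → ℝ}
    (h : ∀ i l, (∀ j k, u j k - v j k ≤ u i l - v i l) → F u i l ≤ F v i l) :
    ∀ i l, u i l ≤ v i l := by
  intro i l
  have : Nonempty (Fin d × Fin N) := ⟨(i, l)⟩
  obtain ⟨⟨i₀, l₀⟩, hp⟩ := Finite.exists_max fun q : Fin d × Fin N => u q.1 q.2 - v q.1 q.2
  have hmax : ∀ j k, u j k - v j k ≤ u i₀ l₀ - v i₀ l₀ := fun j k => hp (j, k)
  by_contra hlt
  have hpos : 0 < u i₀ l₀ - v i₀ l₀ := by linarith [hmax i l, not_le.mp hlt]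
  have hγF := hF u v i₀ l₀ hmax hpos.le
  nlinarith [h i₀ l₀ hmax, mul_pos hγ hpos]

theorem penalized_comparison_general {N d : ℕ}
    (γ : ℝ) (hγ : 0 < γ)
    (F : (Fin d → Fin N → ℝ) → Fin d → Fin N → ℝ)
    (hFmono : IsMonotoneSystem γ F)
    (π : ℝ → ℝ) (hπ : IsPenaltyFunction π)
    (ρ : ℝ) (hρ : 0 ≤ ρ) (c : ℝ)
    (u v : Fin d → Fin N → ℝ)
    (hu : ∀ i l, F u i l - ρ * ∑ j ∈ Finset.univ.erase i, π (u j l - c - u i l) ≤ 0)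
    (hv : ∀ i l, 0 ≤ F v i l - ρ * ∑ j ∈ Finset.univ.erase i, π (v j l - c - v i l)) :
    ∀ i l, u i l ≤ v i l := by
  refine hFmono.le_of_le_at_max hγ fun i l hmax => ?_
  have hpenalty := Finset.sum_penalty_le_of_sub_le hπ.2.1 (Finset.univ.erase i) c
    (x := fun j => u j l) (y := fun j => v j l) fun j _ => hmax j l
  calc F u i l ≤ ρ * ∑ j ∈ Finset.univ.erase i, π (u j l - c - u i l) := by linarith [hu i l]
    _ ≤ ρ * ∑ j ∈ Finset.univ.erase i, π (v j l - c - v i l) :=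
      mul_le_mul_of_nonneg_left hpenalty hρ
    _ ≤ F v i l := by linarith [hv i l]

/-- Comparison principle for the penalized equation. -/
theorem penalized_comparison {N d : ℕ} (hN : 1 ≤ N) (hd : 2 ≤ d)
    (γ : ℝ) (hγ : 0 < γ)
    (F : (Fin d → Fin N → ℝ) → Fin d → Fin N → ℝ)
    (hFcont : Continuous F) (hFmono : IsMonotoneSystem γ F)
    (π : ℝ → ℝ) (hπ : IsPenaltyFunction π)
    (ρ : ℝ) (hρ : 0 ≤ ρ) (c : ℝ) (hc : 0 ≤ c)
    (u v : Fin d → Fin N → ℝ)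
    (hu : ∀ i l, F u i l - ρ * ∑ j ∈ Finset.univ.erase i, π (u j l - c - u i l) ≤ 0)
    (hv : ∀ i l, 0 ≤ F v i l - ρ * ∑ j ∈ Finset.univ.erase i, π (v j l - c - v i l)) :
    ∀ i l, u i l ≤ v i l :=
  penalized_comparison_general γ hγ F hFmono π hπ ρ hρ c u v hu hv
end
end

section
/- A priori bound for the penalized equation: let ρ ≥ 0 and c ≥ 0, and suppose u^ρ ∈ ℝ^{N×d} satisfies F_i(u^ρ)_l − ρ·Σ_{j≠i} π((u^ρ)^j_l − c − (u^ρ)^i_l) = 0 for all i ∈ I and l ∈ {1,…,N}. Then ‖u^ρ‖ ≤ ‖F(0)‖/γ. -/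
open Filter Topology

noncomputable section

/-!
Compare `u` with `0` through the monotonicity of `F`. At a point where `u` is maximal and
nonnegative, `γ u ≤ F u - F 0 ≤ ‖F 0‖` because the penalty terms vanish there (`c ≥ 0`), so
`F u = 0`; at a point where `u` is minimal and nonpositive, `-γ u ≤ F 0 - F u ≤ ‖F 0‖` because
`F u = ρ Σ π(…) ≥ 0`.
-/

theorem IsPenaltyFunction.nonneg {π : ℝ → ℝ} (hπ : IsPenaltyFunction π) (y : ℝ) : 0 ≤ π y := by
  obtain ⟨-, hmono, hzero, -⟩ := hπ
  rcases le_total y 0 with hy | hy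
  · exact (hzero y hy).ge
  · exact (hzero 0 le_rfl).symm.le.trans (hmono hy)

section SupNorm

variable {N d : ℕ}

theorem abs_le_supNorm (u : Fin d → Fin N → ℝ) (i : Fin d) (l : Fin N) :
    |u i l| ≤ supNorm u :=
  le_ciSup (f := fun p : Fin d × Fin N => |u p.1 p.2|) (Set.finite_range _).bddAbove (i, l)

theorem supNorm_nonneg (u : Fin d → Fin N → ℝ) : 0 ≤ supNorm u :=
  Real.iSup_nonneg fun _ => abs_nonneg _

end SupNorm

namespace IsMonotoneSystem

variable {N d : ℕ} {γ : ℝ} {F : (Fin d → Fin N → ℝ) → Fin d → Fin N → ℝ}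

theorem mul_le_sub_of_isMax (hF : IsMonotoneSystem γ F) {u : Fin d → Fin N → ℝ} {i : Fin d}
    {l : Fin N} (hmax : ∀ j k, u j k ≤ u i l) (hnonneg : 0 ≤ u i l) :
    γ * u i l ≤ F u i l - F 0 i l := by
  simpa using hF u 0 i l (by simpa using hmax) (by simpa using hnonneg)

theorem mul_neg_le_sub_of_isMin (hF : IsMonotoneSystem γ F) {u : Fin d → Fin N → ℝ} {i : Fin d}
    {l : Fin N} (hmin : ∀ j k, u i l ≤ u j k) (hnonpos : u i l ≤ 0) :
    γ * -u i l ≤ F 0 i l - F u i l := by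
  simpa using hF 0 u i l (by simpa using hmin) (by simpa using hnonpos)

theorem supNorm_le (hF : IsMonotoneSystem γ F) (hγ : 0 < γ) {u : Fin d → Fin N → ℝ}
    (hlower : ∀ i l, 0 ≤ F u i l) (hupper : ∀ i l, (∀ j k, u j k ≤ u i l) → F u i l ≤ 0) :
    supNorm u ≤ supNorm (F 0) / γ := by
  refine Real.iSup_le (fun p => abs_le.2 ⟨?_, ?_⟩) (div_nonneg (supNorm_nonneg _) hγ.le)
  · have : Nonempty (Fin d × Fin N) := ⟨p⟩
    obtain ⟨⟨i, l⟩, hmin⟩ := Finite.exists_min fun q : Fin d × Fin N => u q.1 q.2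
    refine le_trans ?_ (hmin p)
    rcases le_total 0 (u i l) with hu | hu
    · linarith [div_nonneg (supNorm_nonneg (F 0)) hγ.le]
    · have hcompare := hF.mul_neg_le_sub_of_isMin (fun j k => hmin (j, k)) hu
      rw [neg_le, le_div_iff₀ hγ, mul_comm]
      linarith [hlower i l, le_abs_self (F 0 i l), abs_le_supNorm (F 0) i l]
  · have : Nonempty (Fin d × Fin N) := ⟨p⟩
    obtain ⟨⟨i, l⟩, hmax⟩ := Finite.exists_max fun q : Fin d × Fin N => u q.1 q.2
    refine (hmax p).trans ?_
    rcases le_total (u i l) 0 with hu | hu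
    · linarith [div_nonneg (supNorm_nonneg (F 0)) hγ.le]
    · have hcompare := hF.mul_le_sub_of_isMax (fun j k => hmax (j, k)) hu
      rw [le_div_iff₀ hγ, mul_comm]
      linarith [hupper i l fun j k => hmax (j, k), neg_abs_le (F 0 i l),
        abs_le_supNorm (F 0) i l]

end IsMonotoneSystem

theorem penalized_apriori_bound_general {N d : ℕ}
    (γ : ℝ) (hγ : 0 < γ)
    (F : (Fin d → Fin N → ℝ) → Fin d → Fin N → ℝ)
    (hFmono : IsMonotoneSystem γ F)
    (π : ℝ → ℝ) (hπ : IsPenaltyFunction π)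
    (ρ : ℝ) (hρ : 0 ≤ ρ) (c : ℝ) (hc : 0 ≤ c)
    (uρ : Fin d → Fin N → ℝ)
    (huρ : ∀ i l, F uρ i l - ρ * ∑ j ∈ Finset.univ.erase i, π (uρ j l - c - uρ i l) = 0) :
    supNorm uρ ≤ supNorm (F 0) / γ := by
  have hF : ∀ i l, F uρ i l = ρ * ∑ j ∈ Finset.univ.erase i, π (uρ j l - c - uρ i l) :=
    fun i l => sub_eq_zero.1 (huρ i l)
  refine hFmono.supNorm_le hγ (fun i l => ?_) (fun i l hmax => ?_)
  · rw [hF]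
    exact mul_nonneg hρ (Finset.sum_nonneg fun j _ => hπ.nonneg _)
  · obtain ⟨-, -, hπ_zero, -⟩ := hπ
    have hpenalty_zero : ∀ j, π (uρ j l - c - uρ i l) = 0 :=
      fun j => hπ_zero _ (by linarith [hmax j l])
    simp [hF, hpenalty_zero]

/-- A priori bound for solutions of the penalized equation. -/
theorem penalized_apriori_bound {N d : ℕ} (hN : 1 ≤ N) (hd : 2 ≤ d)
    (γ : ℝ) (hγ : 0 < γ)
    (F : (Fin d → Fin N → ℝ) → Fin d → Fin N → ℝ)
    (hFcont : Continuous F) (hFmono : IsMonotoneSystem γ F)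
    (π : ℝ → ℝ) (hπ : IsPenaltyFunction π)
    (ρ : ℝ) (hρ : 0 ≤ ρ) (c : ℝ) (hc : 0 ≤ c)
    (uρ : Fin d → Fin N → ℝ)
    (huρ : ∀ i l, F uρ i l - ρ * ∑ j ∈ Finset.univ.erase i, π (uρ j l - c - uρ i l) = 0) :
    supNorm uρ ≤ supNorm (F 0) / γ :=
  penalized_apriori_bound_general γ hγ F hFmono π hπ ρ hρ c hc uρ huρ
end
end

section
/- Comparison principle for the obstacle problem with a fixed obstacle: let c be a switching cost and fix w ∈ ℝ^{N×d}. If u ∈ ℝ^{N×d} satisfies min(F_i(u)_l, u^i_l − (M_i w)_l) ≤ 0 for all i ∈ I and l ∈ {1,…,N}, and v ∈ ℝ^{N×d} satisfies min(F_i(v)_l, v^i_l − (M_i w)_l) ≥ 0 for all i ∈ I and l ∈ {1,…,N}, then u ≤ v componentwise. -/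
open Filter Topology

noncomputable section

/-! At a point where `u - v` attains a positive maximum, monotonicity gives `F u > F v ≥ 0`,
and `u > v ≥ M w` there, so both terms of the minimum in the subsolution inequality for `u`
are positive. -/

theorem IsMonotoneSystem.lt_of_isMax_sub {N d : ℕ} {γ : ℝ}
    {F : (Fin d → Fin N → ℝ) → Fin d → Fin N → ℝ} (hF : IsMonotoneSystem γ F) (hγ : 0 < γ)
    {u v : Fin d → Fin N → ℝ} {i : Fin d} {l : Fin N}
    (hmax : ∀ j k, u j k - v j k ≤ u i l - v i l) (hlt : v i l < u i l) :
    F v i l < F u i l := by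
  have := hF u v i l hmax (sub_nonneg.mpr hlt.le)
  linarith [mul_pos hγ (sub_pos.mpr hlt)]

theorem exists_isMax_sub {ι κ : Type*} [Finite ι] [Finite κ] [Nonempty (ι × κ)]
    (u v : ι → κ → ℝ) : ∃ i l, ∀ j k, u j k - v j k ≤ u i l - v i l := by
  obtain ⟨⟨i, l⟩, hmax⟩ := Finite.exists_max fun p : ι × κ => u p.1 p.2 - v p.1 p.2
  exact ⟨i, l, fun j k => hmax (j, k)⟩

theorem obstacle_comparison_general {N d : ℕ} (γ : ℝ) (hγ : 0 < γ)
    (F : (Fin d → Fin N → ℝ) → Fin d → Fin N → ℝ)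
    (hFmono : IsMonotoneSystem γ F)
    (c : ℝ) (w : Fin d → Fin N → ℝ)
    (u v : Fin d → Fin N → ℝ)
    (hu : ∀ i l, min (F u i l) (u i l - Mop c w i l) ≤ 0)
    (hv : ∀ i l, 0 ≤ min (F v i l) (v i l - Mop c w i l)) :
    ∀ i l, u i l ≤ v i l := by
  by_contra! ⟨i₀, l₀, h₀⟩
  have : Nonempty (Fin d × Fin N) := ⟨(i₀, l₀)⟩
  obtain ⟨i, l, hmax⟩ := exists_isMax_sub u v
  have hlt : v i l < u i l := by linarith [hmax i₀ l₀]
  have hFv : 0 ≤ F v i l := (hv i l).trans (min_le_left _ _)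
  have hMv : Mop c w i l ≤ v i l := sub_nonneg.mp ((hv i l).trans (min_le_right _ _))
  have hFu : 0 < F u i l := hFv.trans_lt (hFmono.lt_of_isMax_sub hγ hmax hlt)
  exact (hu i l).not_gt (lt_min hFu (by linarith))

/-- Comparison principle for the obstacle problem with a fixed obstacle `M_i w`. -/
theorem obstacle_comparison {N d : ℕ} (hN : 1 ≤ N) (hd : 2 ≤ d)
    (γ : ℝ) (hγ : 0 < γ)
    (F : (Fin d → Fin N → ℝ) → Fin d → Fin N → ℝ)
    (hFcont : Continuous F) (hFmono : IsMonotoneSystem γ F)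
    (c : ℝ) (w : Fin d → Fin N → ℝ)
    (u v : Fin d → Fin N → ℝ)
    (hu : ∀ i l, min (F u i l) (u i l - Mop c w i l) ≤ 0)
    (hv : ∀ i l, 0 ≤ min (F v i l) (v i l - Mop c w i l)) :
    ∀ i l, u i l ≤ v i l :=
  obstacle_comparison_general γ hγ F hFmono c w u v hu hv
end
end
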